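/- arXiv:1502.03001 — 2 statements merged into one kernel-verified Lean document; each statement's English description precedes it below -/
import Mathlib

section
/- Let d, n ≥ 2 be integers. If there exists a rational map φ of degree d of the form φ(z) = z·ψ(z^n) for some rational function ψ, then d is congruent to −1, 0, or 1 modulo n. -/
open Polynomial

private lemma aeval_Xpow_ne_zero {p : Polynomial ℂ} (hp : p ≠ 0) {n : ℕ} (hn : n ≠ 0) :
    aeval ((X : Polynomial ℂ) ^ n) p ≠ 0 := by
  rw [← comp_eq_aeval]
  intro h
  have hdeg : ((X : Polynomial ℂ) ^ n).natDegree ≠ 0 := by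
    simp [natDegree_X_pow, hn]
  have := leadingCoeff_comp (p := p) (q := (X : Polynomial ℂ) ^ n) hdeg
  rw [h, leadingCoeff_zero] at this
  have hlc : p.leadingCoeff ≠ 0 := leadingCoeff_ne_zero.mpr hp
  have hlc2 : ((X : Polynomial ℂ) ^ n).leadingCoeff = 1 := monic_X_pow n
  rw [hlc2, one_pow, mul_one] at this
  exact hlc this.symm

private lemma aeval_Xpow_natDegree (p : Polynomial ℂ) (n : ℕ) :
    (aeval ((X : Polynomial ℂ) ^ n) p).natDegree = p.natDegree * n := by
  rw [← comp_eq_aeval, natDegree_comp, natDegree_X_pow]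

/-- degrees of num and denom of a fraction in lowest terms -/
private lemma natDegree_num_denom_of_coprime {p q : Polynomial ℂ} (hq : q ≠ 0)
    (h : IsCoprime p q) (φ : RatFunc ℂ)
    (hφ : φ = algebraMap (Polynomial ℂ) (RatFunc ℂ) p / algebraMap (Polynomial ℂ) (RatFunc ℂ) q) :
    φ.num.natDegree = p.natDegree ∧ φ.denom.natDegree = q.natDegree := by
  have hgu : IsUnit (gcd p q) := h.isUnit_of_dvd' (gcd_dvd_left p q) (gcd_dvd_right p q)
  have hg0 : gcd p q ≠ 0 := hgu.ne_zero
  have hdg : (gcd p q).natDegree = 0 := natDegree_eq_zero_of_isUnit hgu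
  have key : ∀ r : Polynomial ℂ, gcd p q ∣ r → (r / gcd p q).natDegree = r.natDegree := by
    intro r hdvd
    rcases eq_or_ne r 0 with rfl | hr
    · rw [EuclideanDomain.zero_div]
    · have hmul := EuclideanDomain.mul_div_cancel' hg0 hdvd
      have hrd : r / gcd p q ≠ 0 := by
        intro h0; rw [h0, mul_zero] at hmul; exact hr hmul.symm
      conv_rhs => rw [← hmul]
      rw [natDegree_mul hg0 hrd, hdg, zero_add]
  have hc : ((q / gcd p q).leadingCoeff)⁻¹ ≠ 0 := by
    exact inv_ne_zero (leadingCoeff_ne_zero.mpr (right_div_gcd_ne_zero hq))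
  constructor
  · rw [hφ, RatFunc.num_div, natDegree_C_mul hc, key p (gcd_dvd_left p q)]
  · rw [hφ, RatFunc.denom_div _ hq, natDegree_C_mul hc, key q (gcd_dvd_right p q)]

/-- If there is a rational map `φ` of degree `d ≥ 2` of the form
`φ(z) = z·ψ(z^n)` (`n ≥ 2`), then `d ≡ −1, 0` or `1 (mod n)`. -/
theorem admissible_only_if (d n : ℕ) (hd : 2 ≤ d) (hn : 2 ≤ n)
    (φ : RatFunc ℂ)
    (hdeg : max φ.num.natDegree φ.denom.natDegree = d)
    (hform : ∃ A B : Polynomial ℂ, B ≠ 0 ∧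
      φ = RatFunc.X *
        (aeval ((RatFunc.X : RatFunc ℂ) ^ n) A / aeval ((RatFunc.X : RatFunc ℂ) ^ n) B)) :
    (n : ℤ) ∣ (d : ℤ) - 1 ∨ (n : ℤ) ∣ (d : ℤ) ∨ (n : ℤ) ∣ (d : ℤ) + 1 := by
  obtain ⟨A, B, hB, heq⟩ := hform
  have hn0 : n ≠ 0 := by omega
  set alg := algebraMap (Polynomial ℂ) (RatFunc ℂ) with halg
  -- rewrite heq in terms of algebraMap
  have hXalg : (RatFunc.X : RatFunc ℂ) = alg X := (RatFunc.algebraMap_X).symm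
  have haev : ∀ p : Polynomial ℂ,
      aeval ((RatFunc.X : RatFunc ℂ) ^ n) p = alg (aeval ((X : Polynomial ℂ) ^ n) p) := by
    intro p
    rw [hXalg, ← map_pow, aeval_algebraMap_apply]
  rw [haev A, haev B, hXalg] at heq
  -- A ≠ 0, else φ = 0 contradicting d ≥ 2
  have hA : A ≠ 0 := by
    rintro rfl
    simp only [map_zero, zero_div, mul_zero] at heq
    rw [heq] at hdeg
    simp [RatFunc.num_zero, RatFunc.denom_zero] at hdeg
    omega
  -- reduce A / B to lowest terms
  set g := gcd A B with hgdef
  have hg0 : g ≠ 0 := gcd_ne_zero_of_right hB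
  set A' := A / g with hA'def
  set B' := B / g with hB'def
  have hAeq : g * A' = A := EuclideanDomain.mul_div_cancel' hg0 (gcd_dvd_left A B)
  have hBeq : g * B' = B := EuclideanDomain.mul_div_cancel' hg0 (gcd_dvd_right A B)
  have cop : IsCoprime A' B' := isCoprime_div_gcd_div_gcd hB
  have hA' : A' ≠ 0 := by intro h0; rw [h0, mul_zero] at hAeq; exact hA hAeq.symm
  have hB' : B' ≠ 0 := by intro h0; rw [h0, mul_zero] at hBeq; exact hB hBeq.symm
  set PA := aeval ((X : Polynomial ℂ) ^ n) A' with hPAdef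
  set PB := aeval ((X : Polynomial ℂ) ^ n) B' with hPBdef
  set PG := aeval ((X : Polynomial ℂ) ^ n) g with hPGdef
  have hPA0 : PA ≠ 0 := aeval_Xpow_ne_zero hA' hn0
  have hPB0 : PB ≠ 0 := aeval_Xpow_ne_zero hB' hn0
  have hPG0 : PG ≠ 0 := aeval_Xpow_ne_zero hg0 hn0
  have hmapA : aeval ((X : Polynomial ℂ) ^ n) A = PG * PA := by
    rw [← hAeq, map_mul]
  have hmapB : aeval ((X : Polynomial ℂ) ^ n) B = PG * PB := by
    rw [← hBeq, map_mul]
  have hX0 : alg X ≠ 0 := RatFunc.algebraMap_ne_zero X_ne_zero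
  have hPG0' : alg PG ≠ 0 := RatFunc.algebraMap_ne_zero hPG0
  have hPB0' : alg PB ≠ 0 := RatFunc.algebraMap_ne_zero hPB0
  -- φ = alg (X * PA) / alg PB
  have heq2 : φ = alg (X * PA) / alg PB := by
    rw [heq, hmapA, hmapB, map_mul, map_mul, map_mul]
    rw [mul_div_mul_left _ _ hPG0']
    field_simp
  -- coprimality transfer
  have copP : IsCoprime PA PB := by
    have := cop.map ((aeval ((X : Polynomial ℂ) ^ n)).toRingHom)
    simpa using this
  have hXdvd : ∀ p : Polynomial ℂ, X ∣ aeval ((X : Polynomial ℂ) ^ n) p ↔ X ∣ p := by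
    intro p
    rw [X_dvd_iff, X_dvd_iff, coeff_zero_eq_eval_zero, coeff_zero_eq_eval_zero,
      ← comp_eq_aeval, eval_comp]
    have : eval 0 ((X : Polynomial ℂ) ^ n) = 0 := by
      simp [zero_pow hn0]
    rw [this]
  by_cases hXB : X ∣ B'
  · -- case X ∣ B' : conclusion is n ∣ d or n ∣ d + 1
    obtain ⟨C, hC⟩ := hXB
    have hC0 : C ≠ 0 := by rintro rfl; rw [mul_zero] at hC; exact hB' hC
    set PC := aeval ((X : Polynomial ℂ) ^ n) C with hPCdef
    have hPC0 : PC ≠ 0 := aeval_Xpow_ne_zero hC0 hn0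
    have hPBsplit : PB = X ^ n * PC := by
      rw [hPBdef, hC, map_mul, aeval_X]
    -- cancel one X
    have hn1 : n - 1 + 1 = n := by omega
    have heq3 : φ = alg PA / alg (X ^ (n - 1) * PC) := by
      have hXsplit : (X : Polynomial ℂ) ^ n = X * (X ^ (n - 1)) := by
        rw [← pow_succ', hn1]
      rw [heq2, hPBsplit, hXsplit]
      rw [map_mul, map_mul, map_mul, mul_assoc, mul_div_mul_left _ _ hX0, ← map_mul]
    -- coprimality
    have hA'X : IsCoprime A' X := cop.of_isCoprime_of_dvd_right ⟨C, hC⟩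
    have hnXA' : ¬ X ∣ A' := by
      intro hdvd
      exact (irreducible_X.coprime_iff_not_dvd).mp hA'X.symm hdvd
    have hXPA : IsCoprime X PA := by
      rw [irreducible_X.coprime_iff_not_dvd, hXdvd]
      exact hnXA'
    have copAC : IsCoprime PA PC := by
      have : IsCoprime A' C := cop.of_isCoprime_of_dvd_right ⟨X, by rw [hC, mul_comm]⟩
      have := this.map ((aeval ((X : Polynomial ℂ) ^ n)).toRingHom)
      simpa using this
    have cop2 : IsCoprime PA (X ^ (n - 1) * PC) :=
      IsCoprime.mul_right (hXPA.symm.pow_right) copAC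
    have hq0 : (X : Polynomial ℂ) ^ (n - 1) * PC ≠ 0 :=
      mul_ne_zero (pow_ne_zero _ X_ne_zero) hPC0
    obtain ⟨hnum, hden⟩ := natDegree_num_denom_of_coprime hq0 cop2 φ heq3
    have hnumdeg : φ.num.natDegree = A'.natDegree * n := by
      rw [hnum, hPAdef, aeval_Xpow_natDegree]
    have hdendeg : φ.denom.natDegree = (n - 1) + C.natDegree * n := by
      rw [hden, natDegree_mul (pow_ne_zero _ X_ne_zero) hPC0, natDegree_X_pow,
        hPCdef, aeval_Xpow_natDegree]
    rcases max_choice φ.num.natDegree φ.denom.natDegree with hmax | hmax <;>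
      rw [hmax] at hdeg
    · right; left
      rw [← hdeg, hnumdeg]
      exact ⟨A'.natDegree, by push_cast; ring⟩
    · right; right
      rw [← hdeg, hdendeg]
      refine ⟨(C.natDegree : ℤ) + 1, ?_⟩
      have h1n : 1 ≤ n := by omega
      push_cast [Nat.cast_sub h1n]
      ring
  · -- case ¬ X ∣ B' : conclusion is n ∣ d - 1 or n ∣ d
    have hXPB : IsCoprime X PB := by
      rw [irreducible_X.coprime_iff_not_dvd, hXdvd]
      exact hXB
    have cop1 : IsCoprime (X * PA) PB := IsCoprime.mul_left hXPB copP
    obtain ⟨hnum, hden⟩ := natDegree_num_denom_of_coprime hPB0 cop1 φ heq2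
    have hnumdeg : φ.num.natDegree = 1 + A'.natDegree * n := by
      rw [hnum, natDegree_mul X_ne_zero hPA0, natDegree_X, hPAdef, aeval_Xpow_natDegree]
    have hdendeg : φ.denom.natDegree = B'.natDegree * n := by
      rw [hden, hPBdef, aeval_Xpow_natDegree]
    rcases max_choice φ.num.natDegree φ.denom.natDegree with hmax | hmax <;>
      rw [hmax] at hdeg
    · left
      rw [← hdeg, hnumdeg]
      exact ⟨A'.natDegree, by push_cast; ring⟩
    · right; left
      rw [← hdeg, hdendeg]
      exact ⟨B'.natDegree, by push_cast; ring⟩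
end

section
/- Let r ≥ 0 and let ψ(z) = (Σ a_k z^k)/(Σ b_k z^k) be a nonconstant rational function of degree r satisfying ψ(1/z) = 1/ψ(z). Then there exists λ ∈ {1, −1} such that b_k = λ·a_{r−k} for all k = 0,…,r, where numerator and denominator are coprime with max degree r. -/
open Polynomial


lemma natDegree_reflect_le' {f : ℂ[X]} {N : ℕ} (hf : f.natDegree ≤ N) :
    (reflect N f).natDegree ≤ N := by
  apply natDegree_le_iff_coeff_eq_zero.mpr
  intro i hi
  rw [coeff_reflect, revAt_eq_self_of_lt hi]
  exact coeff_eq_zero_of_natDegree_lt (lt_of_le_of_lt hf hi)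

lemma reflect_reflect' (N : ℕ) (f : ℂ[X]) : reflect N (reflect N f) = f := by
  ext i; rw [coeff_reflect, coeff_reflect, revAt_invol]

lemma aeval_inv_X_eq (r : ℕ) (f : ℂ[X]) (hf : f.natDegree ≤ r) :
    aeval ((RatFunc.X : RatFunc ℂ)⁻¹) f * RatFunc.X ^ r
      = algebraMap ℂ[X] (RatFunc ℂ) (reflect r f) := by
  have hX : (RatFunc.X : RatFunc ℂ) ≠ 0 := RatFunc.X_ne_zero
  letI : Invertible (RatFunc.X : RatFunc ℂ) := invertibleOfNonzero hX
  have h := eval₂_reflect_mul_pow (algebraMap ℂ (RatFunc ℂ)) (RatFunc.X : RatFunc ℂ) r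
    (reflect r f) (natDegree_reflect_le' hf)
  rw [reflect_reflect'] at h
  have hinv : (⅟(RatFunc.X : RatFunc ℂ)) = (RatFunc.X : RatFunc ℂ)⁻¹ := invOf_eq_right_inv (mul_inv_cancel₀ hX)
  rw [hinv] at h
  rw [← aeval_def] at h
  rw [h, ← aeval_def, ← RatFunc.algebraMap_X, aeval_algebraMap_apply, aeval_X_left_apply]

/-- If `ψ` is a nonconstant rational function of degree `r` (coprime
numerator/denominator of max degree `r`) satisfying `ψ(1/z) = 1/ψ(z)`, then there is
`λ ∈ {1, −1}` with `b_k = λ·a_{r−k}` for all `k ≤ r`, where `a`, `b` are the coefficients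
of the numerator and denominator. -/
theorem inversive_implies_palindromic (r : ℕ) (hr : 1 ≤ r) (ψ : RatFunc ℂ)
    (hdeg : max ψ.num.natDegree ψ.denom.natDegree = r)
    (hinv : aeval ((RatFunc.X : RatFunc ℂ)⁻¹) ψ.num / aeval ((RatFunc.X : RatFunc ℂ)⁻¹) ψ.denom
      = ψ⁻¹) :
    ∃ lam : ℂ, (lam = 1 ∨ lam = -1) ∧
      ∀ k ≤ r, ψ.denom.coeff k = lam * ψ.num.coeff (r - k) := by
  set P := ψ.num with hPdef
  set Q := ψ.denom with hQdef
  have hψ : ψ ≠ 0 := by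
    intro h
    have hP0 : P = 0 := by rw [hPdef, h, RatFunc.num_zero]
    have hQ1 : Q = 1 := by rw [hQdef, h, RatFunc.denom_zero]
    rw [hP0, hQ1] at hdeg
    simp at hdeg
    omega
  have hP : P ≠ 0 := RatFunc.num_ne_zero hψ
  have hQ : Q ≠ 0 := RatFunc.denom_ne_zero ψ
  have hPr : P.natDegree ≤ r := hdeg ▸ le_max_left _ _
  have hQr : Q.natDegree ≤ r := hdeg ▸ le_max_right _ _
  set φ := algebraMap ℂ[X] (RatFunc ℂ) with hφ
  have hXr : (RatFunc.X : RatFunc ℂ) ^ r ≠ 0 := pow_ne_zero _ RatFunc.X_ne_zero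
  -- rewrite hinv
  have h1 := aeval_inv_X_eq r P hPr
  have h2 := aeval_inv_X_eq r Q hQr
  have hinv' : φ (reflect r P) / φ (reflect r Q) = φ Q / φ P := by
    rw [← h1, ← h2, mul_div_mul_right _ _ hXr, hinv, ← RatFunc.num_div_denom ψ, inv_div]
  have hφP : φ P ≠ 0 := by
    simpa [hφ] using (RatFunc.algebraMap_ne_zero hP)
  have hφrQ : φ (reflect r Q) ≠ 0 := by
    have : reflect r Q ≠ 0 := by rwa [Ne, reflect_eq_zero_iff]
    simpa [hφ] using (RatFunc.algebraMap_ne_zero this)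
  have key : reflect r P * P = Q * reflect r Q := by
    apply RatFunc.algebraMap_injective ℂ
    rw [map_mul, map_mul]
    exact (div_eq_div_iff hφrQ hφP).mp hinv'
  have hcop : IsCoprime P Q := RatFunc.isCoprime_num_denom ψ
  have hQd : Q ∣ reflect r P :=
    (hcop.symm).dvd_of_dvd_mul_right ⟨reflect r Q, key⟩
  have hPd : P ∣ reflect r Q :=
    hcop.dvd_of_dvd_mul_left ⟨reflect r P, by linear_combination -key⟩
  obtain ⟨u, hu⟩ := hQd
  obtain ⟨v, hv⟩ := hPd
  have hu0 : u ≠ 0 := by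
    intro h
    rw [h, mul_zero] at hu
    exact hP (reflect_eq_zero_iff.mp hu)
  have hv0 : v ≠ 0 := by
    intro h
    rw [h, mul_zero] at hv
    exact hQ (reflect_eq_zero_iff.mp hv)
  have huv : u = v := by
    have h3 : Q * P * u = Q * P * v := by
      have h4 : Q * u * P = Q * (P * v) := by rw [← hu, ← hv, key]
      linear_combination h4
    exact mul_left_cancel₀ (mul_ne_zero hQ hP) h3
  have hud : u.natDegree = 0 := by
    have d1 : Q.natDegree + u.natDegree ≤ r := by
      rw [← natDegree_mul hQ hu0, ← hu]; exact natDegree_reflect_le' hPr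
    have d2 : P.natDegree + v.natDegree ≤ r := by
      rw [← natDegree_mul hP hv0, ← hv]; exact natDegree_reflect_le' hQr
    rw [← huv] at d2
    omega
  obtain ⟨c, hc⟩ : ∃ c, u = C c := ⟨u.coeff 0, (eq_C_of_natDegree_eq_zero hud)⟩
  have hc0 : c ≠ 0 := by rintro rfl; simp at hc; exact hu0 hc
  -- c * c = 1
  have hPP : P = C c * (C c * P) := by
    have h5 := congrArg (reflect r) hu
    rw [reflect_reflect', hc, mul_comm Q (C c), reflect_C_mul, hv, ← huv, hc] at h5
    linear_combination h5
  have hcc : c * c = 1 := by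
    have h3 := congrArg (fun p => coeff p P.natDegree) hPP
    simp only [coeff_C_mul] at h3
    have hl : P.coeff P.natDegree ≠ 0 := by
      rw [← leadingCoeff]; exact leadingCoeff_ne_zero.mpr hP
    apply mul_right_cancel₀ hl
    linear_combination -h3
  refine ⟨c, mul_self_eq_one_iff.mp hcc, ?_⟩
  intro k hk
  have := congrArg (fun p => coeff p k) hu
  simp only [hc, coeff_mul_C, coeff_reflect, revAt_le hk] at this
  calc Q.coeff k = Q.coeff k * (c * c) := by rw [hcc]; ring
    _ = (Q.coeff k * c) * c := by ring
    _ = c * P.coeff (r - k) := by rw [← this]; ring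
end
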